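/- Let d ≥ 2, let U ⊆ ℝ^d be a U-shaped closed convex set with nonempty interior, let ε > 0, let q be a frontier point of U, and let h be a non-vertical supporting hyperplane of U at q, written h = {x ∈ ℝ^d : x_d = ⟨p̂, x̂⟩ − p_d} for a point p ∈ ℝ^d (so p_d = ⟨p̂, q̂⟩ − q_d). Then π(DBase) − q̂ = ε (π(CBase) − p̂)°; explicitly, π(DBase) − q̂ = {x ∈ ℝ^{d−1} : ⟨x, ŷ − p̂⟩ ≤ ε for all y ∈ CBase}. -/

import Mathlib

open MeasureTheory Metric Set
open scoped RealInnerProductSpace ENNReal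

noncomputable section

/-- Vertical projection `ℝ^d = ℝ^{d-1} × ℝ → ℝ^{d-1}` (forget the last coordinate). -/
def vproj (n : ℕ) (x : EuclideanSpace ℝ (Fin (n + 1))) : EuclideanSpace ℝ (Fin n) :=
  WithLp.toLp 2 (fun (j : Fin n) => x j.castSucc)

/-- The last standard basis vector `e_d` of `ℝ^d` (`d = n + 1`). -/
def ed (n : ℕ) : EuclideanSpace ℝ (Fin (n + 1)) := EuclideanSpace.single (Fin.last n) 1

/-- The projective dual of a U-shaped closed convex set. -/
def Udual {n : ℕ} (U : Set (EuclideanSpace ℝ (Fin (n + 1)))) :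
    Set (EuclideanSpace ℝ (Fin (n + 1))) :=
  {y | ∀ z ∈ U, ⟪vproj n y, vproj n z⟫ - z (Fin.last n) ≤ y (Fin.last n)}

/-!
`⊆`: a point `y ∈ U*` on the cap hyperplane describes a closed half-space above a non-vertical
hyperplane which contains `U` and `q - ε e_d`, hence the whole closed convex hull.

`⊇`: if the point `w ∈ h` over `x + q̂` were outside the closed convex hull, it could be separated
from it. The hull contains upward rays and lies above the hyperplane dual to `p + ε e_d`, so the
separating hyperplane can be taken non-vertical, i.e. dual to some `A ∈ U*`. The segment from
`p` to `A` inside the convex set `U*` crosses the cap hyperplane, and the crossing point violates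
the polar inequality at `x`.
-/

lemma nonpos_of_forall_add_mul_le {a b u : ℝ} (h : ∀ t : ℝ, 0 ≤ t → a + t * b ≤ u) : b ≤ 0 := by
  by_contra! hb
  have hau : a ≤ u := by simpa using h 0 le_rfl
  have := h ((u - a + 1) / b) (by positivity)
  rw [div_mul_cancel₀ _ hb.ne'] at this
  linarith

section
variable {n : ℕ}

def vlift (v : EuclideanSpace ℝ (Fin n)) (t : ℝ) : EuclideanSpace ℝ (Fin (n + 1)) :=
  WithLp.toLp 2 (Fin.snoc (α := fun _ => ℝ) (fun j => v j) t)

@[simp] lemma vproj_vlift (v : EuclideanSpace ℝ (Fin n)) (t : ℝ) : vproj n (vlift v t) = v := by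
  ext j; simp [vproj, vlift]

@[simp] lemma vlift_last (v : EuclideanSpace ℝ (Fin n)) (t : ℝ) : vlift v t (Fin.last n) = t := by
  simp [vlift]

@[simp] lemma vproj_add (x y : EuclideanSpace ℝ (Fin (n + 1))) :
    vproj n (x + y) = vproj n x + vproj n y := rfl

@[simp] lemma vproj_sub (x y : EuclideanSpace ℝ (Fin (n + 1))) :
    vproj n (x - y) = vproj n x - vproj n y := rfl

@[simp] lemma vproj_smul (c : ℝ) (x : EuclideanSpace ℝ (Fin (n + 1))) :
    vproj n (c • x) = c • vproj n x := rfl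

@[simp] lemma vproj_ed : vproj n (ed n) = 0 := by
  ext j; simp [vproj, ed]

@[simp] lemma ed_last : ed n (Fin.last n) = 1 := by
  simp [ed]

lemma vproj_add_smul_ed (x : EuclideanSpace ℝ (Fin (n + 1))) (t : ℝ) :
    vproj n (x + t • ed n) = vproj n x := by
  simp

lemma add_smul_ed_last (x : EuclideanSpace ℝ (Fin (n + 1))) (t : ℝ) :
    (x + t • ed n) (Fin.last n) = x (Fin.last n) + t := by
  simp

lemma vproj_sub_smul_ed (x : EuclideanSpace ℝ (Fin (n + 1))) (t : ℝ) :
    vproj n (x - t • ed n) = vproj n x := by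
  simp

lemma sub_smul_ed_last (x : EuclideanSpace ℝ (Fin (n + 1))) (t : ℝ) :
    (x - t • ed n) (Fin.last n) = x (Fin.last n) - t := by
  simp

lemma inner_eq_inner_vproj_add_mul_last (x y : EuclideanSpace ℝ (Fin (n + 1))) :
    ⟪x, y⟫ = ⟪vproj n x, vproj n y⟫ + x (Fin.last n) * y (Fin.last n) := by
  simp [PiLp.inner_apply, vproj, Fin.sum_univ_castSucc, mul_comm]

lemma inner_vlift_neg_one (a : EuclideanSpace ℝ (Fin n)) (z : EuclideanSpace ℝ (Fin (n + 1))) :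
    ⟪vlift a (-1), z⟫ = ⟪a, vproj n z⟫ - z (Fin.last n) := by
  rw [inner_eq_inner_vproj_add_mul_last, vproj_vlift, vlift_last]; ring

/-- The closed half-space above the non-vertical hyperplane `x_d = ⟪ŷ, x̂⟫ - y_d`. -/
def upperHalfspace (y : EuclideanSpace ℝ (Fin (n + 1))) : Set (EuclideanSpace ℝ (Fin (n + 1))) :=
  {z | ⟪vproj n y, vproj n z⟫ - z (Fin.last n) ≤ y (Fin.last n)}

@[simp] lemma mem_upperHalfspace {y z : EuclideanSpace ℝ (Fin (n + 1))} :
    z ∈ upperHalfspace y ↔ ⟪vproj n y, vproj n z⟫ - z (Fin.last n) ≤ y (Fin.last n) :=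
  Iff.rfl

lemma mem_Udual_iff {U : Set (EuclideanSpace ℝ (Fin (n + 1)))}
    {y : EuclideanSpace ℝ (Fin (n + 1))} :
    y ∈ Udual U ↔ U ⊆ upperHalfspace y :=
  Iff.rfl

lemma upperHalfspace_eq (y : EuclideanSpace ℝ (Fin (n + 1))) :
    upperHalfspace y = {z | ⟪vlift (vproj n y) (-1), z⟫ ≤ y (Fin.last n)} := by
  simp only [upperHalfspace, inner_vlift_neg_one]

lemma isClosed_upperHalfspace (y : EuclideanSpace ℝ (Fin (n + 1))) :
    IsClosed (upperHalfspace y) := by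
  rw [upperHalfspace_eq]
  exact isClosed_le (innerSL ℝ _).continuous continuous_const

lemma convex_upperHalfspace (y : EuclideanSpace ℝ (Fin (n + 1))) :
    Convex ℝ (upperHalfspace y) := by
  rw [upperHalfspace_eq]
  exact convex_halfSpace_le (innerₛₗ ℝ _).isLinear _

lemma closure_convexHull_subset_upperHalfspace {A : Set (EuclideanSpace ℝ (Fin (n + 1)))}
    {y : EuclideanSpace ℝ (Fin (n + 1))} (h : A ⊆ upperHalfspace y) :
    closure (convexHull ℝ A) ⊆ upperHalfspace y :=
  closure_minimal (convexHull_min h (convex_upperHalfspace y)) (isClosed_upperHalfspace y)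

lemma sub_smul_ed_mem_upperHalfspace_iff {q y : EuclideanSpace ℝ (Fin (n + 1))} {t : ℝ} :
    q - t • ed n ∈ upperHalfspace y ↔
      ⟪vproj n y, vproj n q⟫ - q (Fin.last n) + t ≤ y (Fin.last n) := by
  rw [mem_upperHalfspace, vproj_sub_smul_ed, sub_smul_ed_last, sub_sub_eq_add_sub,
    add_sub_right_comm]

lemma Udual_eq_iInter (U : Set (EuclideanSpace ℝ (Fin (n + 1)))) :
    Udual U = ⋂ z ∈ U, {y | ⟪vlift (vproj n z) (-1), y⟫ ≤ z (Fin.last n)} := by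
  ext y
  simp only [Udual, mem_iInter, mem_ofPred_eq, inner_vlift_neg_one, real_inner_comm (vproj n y)]
  exact forall₂_congr fun z _ => by constructor <;> intro h <;> linarith

lemma convex_Udual (U : Set (EuclideanSpace ℝ (Fin (n + 1)))) : Convex ℝ (Udual U) := by
  rw [Udual_eq_iInter]
  exact convex_iInter₂ fun z _ => convex_halfSpace_le (innerₛₗ ℝ _).isLinear _

lemma add_smul_ed_mem_Udual {U : Set (EuclideanSpace ℝ (Fin (n + 1)))}
    {y : EuclideanSpace ℝ (Fin (n + 1))} (hy : y ∈ Udual U) {t : ℝ} (ht : 0 ≤ t) :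
    y + t • ed n ∈ Udual U := fun z hz => by
  rw [vproj_add_smul_ed, add_smul_ed_last]
  linarith [hy z hz]

lemma closure_convexHull_union_subset_upperHalfspace {U : Set (EuclideanSpace ℝ (Fin (n + 1)))}
    {q y : EuclideanSpace ℝ (Fin (n + 1))} {ε : ℝ} (hyU : y ∈ Udual U)
    (hqy : ⟪vproj n y, vproj n q⟫ - q (Fin.last n) + ε ≤ y (Fin.last n)) :
    closure (convexHull ℝ (U ∪ {q - ε • ed n})) ⊆ upperHalfspace y :=
  closure_convexHull_subset_upperHalfspace <| union_subset (mem_Udual_iff.1 hyU) <|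
    singleton_subset_iff.2 (sub_smul_ed_mem_upperHalfspace_iff.2 hqy)

lemma exists_upperHalfspace_of_vertical_separation {S : Set (EuclideanSpace ℝ (Fin (n + 1)))}
    {b : EuclideanSpace ℝ (Fin (n + 1))} (hb : S ⊆ upperHalfspace b) {a : EuclideanSpace ℝ (Fin n)}
    {u : ℝ} (haS : ∀ z ∈ S, ⟪a, vproj n z⟫ ≤ u) {w : EuclideanSpace ℝ (Fin (n + 1))}
    (haw : u < ⟪a, vproj n w⟫) :
    ∃ A, S ⊆ upperHalfspace A ∧ w ∉ upperHalfspace A := by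
  set K := b (Fin.last n) - ⟪vproj n b, vproj n w⟫ + w (Fin.last n)
  set r := (|K| + 1) / (⟪a, vproj n w⟫ - u)
  have hr : 0 ≤ r := div_nonneg (by positivity) (sub_pos.2 haw).le
  have hrw : r * (⟪a, vproj n w⟫ - u) = |K| + 1 := div_mul_cancel₀ _ (sub_pos.2 haw).ne'
  refine ⟨b + r • vlift a u, fun z hz => ?_, fun hwA => ?_⟩
  · have hbz := hb hz
    have hrz := mul_le_mul_of_nonneg_left (haS z hz) hr
    simp only [mem_upperHalfspace, vproj_add, vproj_smul, vproj_vlift, inner_add_left,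
      real_inner_smul_left, PiLp.add_apply, PiLp.smul_apply, vlift_last, smul_eq_mul] at hbz ⊢
    linarith
  · simp only [mem_upperHalfspace, vproj_add, vproj_smul, vproj_vlift, inner_add_left,
      real_inner_smul_left, PiLp.add_apply, PiLp.smul_apply, vlift_last, smul_eq_mul] at hwA
    linarith [le_abs_self K]

/-- An upward ray in `S` makes the last coordinate of a separating functional nonpositive; when
it vanishes, the separating hyperplane is vertical and gets tilted using the half-space of `b`. -/
lemma exists_upperHalfspace_of_notMem {S : Set (EuclideanSpace ℝ (Fin (n + 1)))}
    (hSc : IsClosed S) (hSconv : Convex ℝ S) {x₀ : EuclideanSpace ℝ (Fin (n + 1))}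
    (hx₀ : ∀ t : ℝ, 0 ≤ t → x₀ + t • ed n ∈ S) {b : EuclideanSpace ℝ (Fin (n + 1))}
    (hb : S ⊆ upperHalfspace b) {w : EuclideanSpace ℝ (Fin (n + 1))} (hw : w ∉ S) :
    ∃ A, S ⊆ upperHalfspace A ∧ w ∉ upperHalfspace A := by
  obtain ⟨f, u, hfS, hfw⟩ := geometric_hahn_banach_closed_point hSconv hSc hw
  set v := (InnerProductSpace.toDual ℝ _).symm f
  have hf : ∀ z, f z = ⟪vproj n v, vproj n z⟫ + v (Fin.last n) * z (Fin.last n) := fun z => by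
    rw [← inner_eq_inner_vproj_add_mul_last, InnerProductSpace.toDual_symm_apply]
  have hv : v (Fin.last n) ≤ 0 := nonpos_of_forall_add_mul_le fun t ht => by
    simpa [hf (ed n)] using (hfS _ (hx₀ t ht)).le
  rcases hv.lt_or_eq with hneg | hzero
  · set α := -v (Fin.last n)
    have hα : 0 < α := neg_pos.2 hneg
    have hA : ∀ z, z ∈ upperHalfspace (vlift (α⁻¹ • vproj n v) (α⁻¹ * u)) ↔ f z ≤ u := fun z => by
      have hαf : α * (⟪α⁻¹ • vproj n v, vproj n z⟫ - z (Fin.last n)) = f z := by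
        rw [hf, real_inner_smul_left]; field_simp; ring
      rw [mem_upperHalfspace, vproj_vlift, vlift_last, le_inv_mul_iff₀ hα, hαf]
    exact ⟨_, fun z hz => (hA z).2 (hfS z hz).le, fun hwA => ((hA w).1 hwA).not_gt hfw⟩
  · refine exists_upperHalfspace_of_vertical_separation hb (a := vproj n v) (u := u)
      (fun z hz => ?_) ?_
    · simpa [hf, hzero] using (hfS z hz).le
    · simpa [hf, hzero] using hfw

lemma add_smul_sub_mem_Udual_inter_cap {U : Set (EuclideanSpace ℝ (Fin (n + 1)))}
    {p q A : EuclideanSpace ℝ (Fin (n + 1))} (hpU : p ∈ Udual U) (hAU : A ∈ Udual U)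
    (hqh : q (Fin.last n) = ⟪vproj n p, vproj n q⟫ - p (Fin.last n)) {ε : ℝ} (hε : 0 < ε)
    (hεA : ⟪vproj n A, vproj n q⟫ - q (Fin.last n) + ε ≤ A (Fin.last n)) :
    p + (ε / (A (Fin.last n) - ⟪vproj n A, vproj n q⟫ + q (Fin.last n))) • (A - p) ∈
      Udual U ∩ {y | y (Fin.last n) = ⟪vproj n q, vproj n y⟫ - q (Fin.last n) + ε} := by
  -- `y ↦ y_d - ⟪q̂, ŷ⟫ + q_d` is affine, vanishes at `p` and equals `M ≥ ε` at `A`.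
  set M := A (Fin.last n) - ⟪vproj n A, vproj n q⟫ + q (Fin.last n)
  have hM : 0 < M := by linarith
  refine ⟨(convex_Udual U).add_smul_sub_mem hpU hAU
    ⟨by positivity, div_le_one_of_le₀ (by linarith) hM.le⟩, ?_⟩
  have hsM : ε / M * M = ε := div_mul_cancel₀ ε hM.ne'
  simp only [mem_ofPred_eq, PiLp.add_apply, PiLp.smul_apply, PiLp.sub_apply, smul_eq_mul,
    vproj_add, vproj_smul, vproj_sub, inner_add_right, real_inner_smul_right, inner_sub_right,
    real_inner_comm (vproj n p) (vproj n q), real_inner_comm (vproj n A) (vproj n q)]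
  linear_combination hsM + (1 - ε / M) * hqh

lemma inner_vproj_sub_le_of_mem_dual_cap {U : Set (EuclideanSpace ℝ (Fin (n + 1)))}
    {p q : EuclideanSpace ℝ (Fin (n + 1))} {ε : ℝ}
    (hqh : q (Fin.last n) = ⟪vproj n p, vproj n q⟫ - p (Fin.last n))
    {w : EuclideanSpace ℝ (Fin (n + 1))}
    (hwh : w (Fin.last n) = ⟪vproj n p, vproj n w⟫ - p (Fin.last n))
    (hwV : w ∈ closure (convexHull ℝ (U ∪ {q - ε • ed n})))
    {y : EuclideanSpace ℝ (Fin (n + 1))} (hyU : y ∈ Udual U)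
    (hy : y (Fin.last n) = ⟪vproj n q, vproj n y⟫ - q (Fin.last n) + ε) :
    ⟪vproj n w - vproj n q, vproj n y - vproj n p⟫ ≤ ε := by
  have hw := closure_convexHull_union_subset_upperHalfspace hyU (by rw [hy, real_inner_comm]) hwV
  rw [mem_upperHalfspace] at hw
  simp only [inner_sub_left, inner_sub_right]
  linarith [real_inner_comm (vproj n w) (vproj n y), real_inner_comm (vproj n p) (vproj n w),
    real_inner_comm (vproj n q) (vproj n p)]

lemma vlift_mem_closure_convexHull_of_forall_dual_cap {U : Set (EuclideanSpace ℝ (Fin (n + 1)))}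
    {x₀ : EuclideanSpace ℝ (Fin (n + 1))} (hx₀ : x₀ ∈ U)
    (hUsh : ∀ x ∈ U, ∀ t : ℝ, 0 ≤ t → x + t • ed n ∈ U)
    {p q : EuclideanSpace ℝ (Fin (n + 1))} (hpU : p ∈ Udual U)
    (hqh : q (Fin.last n) = ⟪vproj n p, vproj n q⟫ - p (Fin.last n)) {ε : ℝ} (hε : 0 < ε)
    {x : EuclideanSpace ℝ (Fin n)}
    (hx : ∀ y ∈ Udual U ∩ {y | y (Fin.last n) = ⟪vproj n q, vproj n y⟫ - q (Fin.last n) + ε},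
      ⟪x, vproj n y - vproj n p⟫ ≤ ε) :
    vlift (x + vproj n q) (⟪vproj n p, x + vproj n q⟫ - p (Fin.last n)) ∈
      closure (convexHull ℝ (U ∪ {q - ε • ed n})) := by
  set V := closure (convexHull ℝ (U ∪ {q - ε • ed n}))
  have hUV : U ⊆ V := subset_union_left.trans (subset_convexHull ℝ _) |>.trans subset_closure
  have hqV : q - ε • ed n ∈ V := subset_closure (subset_convexHull ℝ _ (mem_union_right _ rfl))
  have hVp : V ⊆ upperHalfspace (p + ε • ed n) :=
    closure_convexHull_union_subset_upperHalfspace (add_smul_ed_mem_Udual hpU hε.le) <| by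
      rw [vproj_add_smul_ed, add_smul_ed_last]; linarith
  by_contra hw
  obtain ⟨A, hVA, hwA⟩ := exists_upperHalfspace_of_notMem isClosed_closure
    (convex_convexHull ℝ _).closure (fun t ht => hUV (hUsh x₀ hx₀ t ht)) hVp hw
  have hεA := sub_smul_ed_mem_upperHalfspace_iff.1 (hVA hqV)
  set M := A (Fin.last n) - ⟪vproj n A, vproj n q⟫ + q (Fin.last n)
  have hM : 0 < M := by linarith
  have hxY := hx _ (add_smul_sub_mem_Udual_inter_cap hpU (fun z hz => hVA (hUV hz)) hqh hε hεA)
  rw [vproj_add, vproj_smul, vproj_sub, add_sub_cancel_left, real_inner_smul_right] at hxY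
  have hxA : M < ⟪x, vproj n A - vproj n p⟫ := by
    rw [mem_upperHalfspace, vproj_vlift, vlift_last, not_le] at hwA
    simp only [inner_add_right, inner_sub_right] at hwA ⊢
    linarith [real_inner_comm x (vproj n A), real_inner_comm x (vproj n p)]
  linarith [mul_lt_mul_of_pos_left hxA (div_pos hε hM), div_mul_cancel₀ ε hM.ne']

end

theorem dual_cap_base_polar_general (n : ℕ)
    (U : Set (EuclideanSpace ℝ (Fin (n + 1))))
    (hUint : (interior U).Nonempty)
    (hUsh : ∀ x ∈ U, ∀ t : ℝ, 0 ≤ t → x + t • ed n ∈ U)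
    (ε : ℝ) (hε : 0 < ε)
    (q : EuclideanSpace ℝ (Fin (n + 1)))
    (p : EuclideanSpace ℝ (Fin (n + 1)))
    (hqh : q (Fin.last n) = ⟪vproj n p, vproj n q⟫ - p (Fin.last n))
    (hsupp : (∀ x ∈ U, ⟪vproj n p, vproj n x⟫ - p (Fin.last n) ≤ x (Fin.last n)) ∨
             (∀ x ∈ U, x (Fin.last n) ≤ ⟪vproj n p, vproj n x⟫ - p (Fin.last n))) :
    (fun v => v - vproj n q) ''
        (vproj n ''
          ({x | x (Fin.last n) = ⟪vproj n p, vproj n x⟫ - p (Fin.last n)} ∩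
            closure (convexHull ℝ (U ∪ {q - ε • ed n}))))
      = {x : EuclideanSpace ℝ (Fin n) |
          ∀ y ∈ Udual U ∩
              {y : EuclideanSpace ℝ (Fin (n + 1)) |
                y (Fin.last n) = ⟪vproj n q, vproj n y⟫ - q (Fin.last n) + ε},
            ⟪x, vproj n y - vproj n p⟫ ≤ ε} := by
  obtain ⟨x₀, hx₀⟩ := hUint
  have hx₀U := interior_subset hx₀
  have hpU : p ∈ Udual U := by
    refine hsupp.elim (fun h z hz => by linarith [h z hz]) fun h => ?_
    have : (1 : ℝ) ≤ 0 := nonpos_of_forall_add_mul_le (a := x₀ (Fin.last n)) fun t ht => by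
      simpa using h _ (hUsh x₀ hx₀U t ht)
    norm_num at this
  ext x
  constructor
  · rintro ⟨_, ⟨w, ⟨hwh, hwV⟩, rfl⟩, rfl⟩ y ⟨hyU, hy⟩
    exact inner_vproj_sub_le_of_mem_dual_cap hqh hwh hwV hyU hy
  · intro hx
    refine ⟨x + vproj n q, ⟨_, ⟨?_, vlift_mem_closure_convexHull_of_forall_dual_cap hx₀U hUsh hpU
      hqh hε hx⟩, vproj_vlift _ _⟩, add_sub_cancel_right _ _⟩
    rw [mem_ofPred_eq, vproj_vlift, vlift_last]

/-- the projected base of the `ε`-dual cap of `U` at `q` equals, after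
translating by `−q̂`, the `ε`-scaled polar of the translated projected base of the
corresponding `ε`-cap of the projective dual `U*`. -/
theorem dual_cap_base_polar (n : ℕ) (hn : 1 ≤ n)
    (U : Set (EuclideanSpace ℝ (Fin (n + 1)))) (hUcl : IsClosed U) (hUconv : Convex ℝ U)
    (hUint : (interior U).Nonempty)
    (hUsh : ∀ x ∈ U, ∀ t : ℝ, 0 ≤ t → x + t • ed n ∈ U)
    (ε : ℝ) (hε : 0 < ε)
    (q : EuclideanSpace ℝ (Fin (n + 1))) (hq : q ∈ frontier U)
    (p : EuclideanSpace ℝ (Fin (n + 1)))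
    (hqh : q (Fin.last n) = ⟪vproj n p, vproj n q⟫ - p (Fin.last n))
    (hsupp : (∀ x ∈ U, ⟪vproj n p, vproj n x⟫ - p (Fin.last n) ≤ x (Fin.last n)) ∨
             (∀ x ∈ U, x (Fin.last n) ≤ ⟪vproj n p, vproj n x⟫ - p (Fin.last n))) :
    (fun v => v - vproj n q) ''
        (vproj n ''
          ({x | x (Fin.last n) = ⟪vproj n p, vproj n x⟫ - p (Fin.last n)} ∩
            closure (convexHull ℝ (U ∪ {q - ε • ed n}))))
      = {x : EuclideanSpace ℝ (Fin n) |
          ∀ y ∈ Udual U ∩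
              {y : EuclideanSpace ℝ (Fin (n + 1)) |
                y (Fin.last n) = ⟪vproj n q, vproj n y⟫ - q (Fin.last n) + ε},
            ⟪x, vproj n y - vproj n p⟫ ≤ ε} :=
  dual_cap_base_polar_general n U hUint hUsh ε hε q p hqh hsupp

end
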